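/- arXiv:2109.00948 — 7 statements merged into one kernel-verified Lean document; each statement's English description precedes it below -/
import Mathlib

section
/- For every real a > 1/2, the kernel G_a is continuous on ℝ and bounded, with G_a(x) ≤ G_a(0) for all x ∈ ℝ and G_a(0) = Γ(a − 1/2) / (2√π · Γ(a)). -/
/-! The heat factor `exp (-x² / (4s))` lies in `(0, 1]` and is continuous in `x`, so averaging it
against an integrable weight gives, by dominated convergence, a continuous function of `x`, which
for a nonnegative weight is largest at `x = 0`. For `G_a` the weight is
`s^(a-1) e^(-s) (4πs)^(-1/2) = (4π)^(-1/2) e^(-s) s^((a-1/2)-1)`, a multiple of the integrand of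
`Γ(a - 1/2)`; this is where `a > 1/2` enters and where the value `G_a(0)` comes from. -/

open MeasureTheory

noncomputable def Gkernel (a : ℝ) (x : ℝ) : ℝ :=
  (1 / Real.Gamma a) * ∫ s in Set.Ioi (0 : ℝ),
    s ^ (a - 1) * Real.exp (-s) * (4 * Real.pi * s) ^ (-(1 / 2) : ℝ) *
      Real.exp (-x ^ 2 / (4 * s))

open Real Set

lemma exp_neg_sq_div_le_one (x : ℝ) {s : ℝ} (hs : 0 ≤ s) : exp (-x ^ 2 / (4 * s)) ≤ 1 :=
  exp_le_one_iff.mpr <| div_nonpos_of_nonpos_of_nonneg (neg_nonpos.mpr (sq_nonneg x)) (by positivity)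

section HeatAverage

variable {w : ℝ → ℝ}

lemma integrableOn_mul_exp_neg_sq_div (hw : IntegrableOn w (Ioi 0)) (x : ℝ) :
    IntegrableOn (fun s => w s * exp (-x ^ 2 / (4 * s))) (Ioi 0) := by
  refine hw.mul_of_top_left (memLp_top_of_bound
    (by fun_prop : Measurable fun s : ℝ => exp (-x ^ 2 / (4 * s))).aestronglyMeasurable 1 ?_)
  filter_upwards [ae_restrict_mem measurableSet_Ioi] with s hs
  rw [norm_of_nonneg (exp_pos _).le]
  exact exp_neg_sq_div_le_one x (le_of_lt hs)

lemma continuous_setIntegral_mul_exp_neg_sq_div (hw : IntegrableOn w (Ioi 0)) :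
    Continuous fun x => ∫ s in Ioi 0, w s * exp (-x ^ 2 / (4 * s)) := by
  refine continuous_of_dominated (fun x => (integrableOn_mul_exp_neg_sq_div hw x).1)
    (fun x => ?_) hw.norm (ae_of_all _ fun s => by fun_prop)
  filter_upwards [ae_restrict_mem measurableSet_Ioi] with s hs
  rw [norm_mul, norm_of_nonneg (exp_pos _).le]
  exact mul_le_of_le_one_right (norm_nonneg _) (exp_neg_sq_div_le_one x (le_of_lt hs))

lemma setIntegral_mul_exp_neg_sq_div_le (hw : IntegrableOn w (Ioi 0))
    (hw_nonneg : ∀ s ∈ Ioi (0 : ℝ), 0 ≤ w s) (x : ℝ) :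
    ∫ s in Ioi 0, w s * exp (-x ^ 2 / (4 * s)) ≤ ∫ s in Ioi 0, w s :=
  setIntegral_mono_on (integrableOn_mul_exp_neg_sq_div hw x) hw measurableSet_Ioi fun s hs =>
    mul_le_of_le_one_right (hw_nonneg s hs) (exp_neg_sq_div_le_one x (le_of_lt hs))

end HeatAverage

noncomputable def gkernelWeight (a s : ℝ) : ℝ :=
  s ^ (a - 1) * exp (-s) * (4 * π * s) ^ (-(1 / 2) : ℝ)

lemma Gkernel_eq (a x : ℝ) :
    Gkernel a x = 1 / Gamma a * ∫ s in Ioi 0, gkernelWeight a s * exp (-x ^ 2 / (4 * s)) :=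
  rfl

lemma gkernelWeight_nonneg (a : ℝ) {s : ℝ} (hs : 0 ≤ s) : 0 ≤ gkernelWeight a s := by
  unfold gkernelWeight; positivity

lemma gkernelWeight_eq (a : ℝ) {s : ℝ} (hs : 0 < s) :
    gkernelWeight a s = (4 * π) ^ (-(1 / 2) : ℝ) * (exp (-s) * s ^ (a - 1 / 2 - 1)) := by
  rw [gkernelWeight, mul_rpow (by positivity) hs.le,
    show a - 1 / 2 - 1 = (a - 1) + (-(1 / 2) : ℝ) by ring, rpow_add hs]
  ring

lemma four_pi_rpow_neg_half : (4 * π) ^ (-(1 / 2) : ℝ) = 1 / (2 * √π) := by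
  rw [rpow_neg (by positivity), ← sqrt_eq_rpow, sqrt_mul (by norm_num),
    show (4 : ℝ) = 2 ^ 2 by norm_num, sqrt_sq (by norm_num), one_div]

lemma integrableOn_gkernelWeight {a : ℝ} (ha : 1 / 2 < a) :
    IntegrableOn (gkernelWeight a) (Ioi 0) :=
  IntegrableOn.congr_fun ((GammaIntegral_convergent (by linarith)).const_mul _)
    (fun s hs => (gkernelWeight_eq a hs).symm) measurableSet_Ioi

lemma setIntegral_gkernelWeight {a : ℝ} (ha : 1 / 2 < a) :
    ∫ s in Ioi 0, gkernelWeight a s = Gamma (a - 1 / 2) / (2 * √π) := by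
  rw [setIntegral_congr_fun measurableSet_Ioi fun s hs => gkernelWeight_eq a hs,
    integral_const_mul, ← Gamma_eq_integral (by linarith), four_pi_rpow_neg_half]
  ring

/-- For every `a > 1/2`, the kernel `G_a` is continuous and bounded, attains its
maximum at `0`, and `G_a(0) = Γ(a - 1/2) / (2√π · Γ(a))`. -/
theorem Gkernel_continuous_bounded (a : ℝ) (ha : 1 / 2 < a) :
    Continuous (Gkernel a) ∧
    (∀ x : ℝ, Gkernel a x ≤ Gkernel a 0) ∧
    Gkernel a 0 = Real.Gamma (a - 1 / 2) / (2 * Real.sqrt Real.pi * Real.Gamma a) := by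
  have hw := integrableOn_gkernelWeight ha
  have hGkernel_zero : Gkernel a 0 = 1 / Gamma a * ∫ s in Ioi 0, gkernelWeight a s := by
    simp [Gkernel_eq]
  refine ⟨continuous_const.mul (continuous_setIntegral_mul_exp_neg_sq_div hw), fun x => ?_, ?_⟩
  · rw [Gkernel_eq, hGkernel_zero]
    exact mul_le_mul_of_nonneg_left (setIntegral_mul_exp_neg_sq_div_le hw
      (fun s hs => gkernelWeight_nonneg a (le_of_lt hs)) x) (by positivity)
  · rw [hGkernel_zero, setIntegral_gkernelWeight ha]
    field_simp
end

section
/- For every real a > 1, the kernel G_a is differentiable at every point of ℝ and its derivative is uniformly bounded: |G_a′(x)| ≤ Γ(a − 1) / (2√(2πe) · Γ(a)) for all x ∈ ℝ. -/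
open MeasureTheory

/-!
Differentiate under the integral sign. The `x`-derivative of the integrand is `-(x / 2s)`
times the integrand, and since `u e^{-u²} ≤ (2e)^{-1/2}` (applied with `u = |x| / (2√s)`) it
is bounded, uniformly in `x`, by `e^{-s} s^{a-2} / (2√(2πe))`. For `a > 1` this is integrable
on `(0, ∞)`, with integral `Γ(a - 1) / (2√(2πe))`.
-/

open Real Set

lemma mul_exp_neg_sq_le (u : ℝ) : u * exp (-u ^ 2) ≤ 1 / √(2 * exp 1) := by
  have hsqrt : √(2 * exp 1) = √2 * exp (1 / 2) := by
    rw [sqrt_mul zero_le_two, ← exp_half]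
  have key : √2 * u ≤ exp (u ^ 2 - 1 / 2) := by
    nlinarith [add_one_le_exp (u ^ 2 - 1 / 2), sq_nonneg (√2 * u - 1),
      sq_sqrt (zero_le_two : (0 : ℝ) ≤ 2)]
  rw [le_div_iff₀ (by positivity), hsqrt]
  calc u * exp (-u ^ 2) * (√2 * exp (1 / 2)) = √2 * u * exp (-u ^ 2 + 1 / 2) := by
        rw [exp_add]; ring
    _ ≤ exp (u ^ 2 - 1 / 2) * exp (-u ^ 2 + 1 / 2) := by gcongr
    _ = 1 := by rw [← exp_add]; ring_nf; exact exp_zero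

lemma abs_div_mul_exp_neg_sq_div_le {s : ℝ} (hs : 0 < s) (x : ℝ) :
    |x| / (2 * s) * exp (-x ^ 2 / (4 * s)) ≤ 1 / √(2 * exp 1 * s) := by
  set u := |x| / (2 * √s)
  have hlin : |x| / (2 * s) = u / √s := by
    rw [div_div, mul_assoc, mul_self_sqrt hs.le]
  have hsq : -x ^ 2 / (4 * s) = -u ^ 2 := by
    rw [div_pow, mul_pow, sq_abs, sq_sqrt hs.le]; ring
  rw [hlin, hsq, div_mul_eq_mul_div, sqrt_mul (by positivity), ← div_div]
  gcongr
  exact mul_exp_neg_sq_le u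

namespace Gkernel

noncomputable def weight (a s : ℝ) : ℝ :=
  s ^ (a - 1) * exp (-s) * (4 * π * s) ^ (-(1 / 2) : ℝ)

noncomputable def integrand (a x s : ℝ) : ℝ :=
  weight a s * exp (-x ^ 2 / (4 * s))

lemma weight_nonneg (a : ℝ) {s : ℝ} (hs : 0 ≤ s) : 0 ≤ weight a s := by
  unfold weight; positivity

lemma weight_eq_div_sqrt (a : ℝ) {s : ℝ} (hs : 0 ≤ s) :
    weight a s = s ^ (a - 1) * exp (-s) / √(4 * π * s) := by
  rw [weight, rpow_neg (by positivity), ← sqrt_eq_rpow, div_eq_mul_inv]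

lemma continuousOn_weight (a : ℝ) : ContinuousOn (weight a) (Ioi 0) := by
  intro s (hs : 0 < s)
  refine ContinuousAt.continuousWithinAt ?_
  unfold weight
  fun_prop (disch := first | positivity | exact Or.inl (by positivity))

lemma continuousOn_integrand (a x : ℝ) : ContinuousOn (integrand a x) (Ioi 0) :=
  (continuousOn_weight a).mul
    (continuousOn_const.div (by fun_prop) fun t (ht : 0 < t) => by positivity).rexp

lemma integrableOn_weight {a : ℝ} (ha : 1 / 2 < a) : IntegrableOn (weight a) (Ioi 0) := by
  have hΓ := (GammaIntegral_convergent (s := a - 1 / 2) (by linarith)).const_mul (1 / √(4 * π))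
  refine IntegrableOn.congr_fun hΓ (fun s (hs : 0 < s) => ?_) measurableSet_Ioi
  rw [weight_eq_div_sqrt a hs.le, sqrt_mul (by positivity : (0 : ℝ) ≤ 4 * π) s, sqrt_eq_rpow s,
    show a - 1 = (a - 1 / 2 - 1) + 1 / 2 by ring, rpow_add hs]
  field_simp

lemma norm_integrand_le_weight (a x : ℝ) {s : ℝ} (hs : 0 < s) :
    ‖integrand a x s‖ ≤ weight a s := by
  have hexp : exp (-x ^ 2 / (4 * s)) ≤ 1 :=
    exp_le_one_iff.2 (div_nonpos_of_nonpos_of_nonneg (neg_nonpos.2 (sq_nonneg x)) (by positivity))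
  rw [integrand, norm_mul, norm_of_nonneg (weight_nonneg a hs.le), norm_of_nonneg (exp_pos _).le]
  exact mul_le_of_le_one_right (weight_nonneg a hs.le) hexp

lemma integrableOn_integrand {a : ℝ} (ha : 1 / 2 < a) (x : ℝ) :
    IntegrableOn (integrand a x) (Ioi 0) :=
  (integrableOn_weight ha).mono'
    ((continuousOn_integrand a x).aestronglyMeasurable measurableSet_Ioi)
    ((ae_restrict_iff' measurableSet_Ioi).2
      (ae_of_all _ fun _ hs => norm_integrand_le_weight a x hs))

lemma hasDerivAt_integrand (a s x : ℝ) :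
    HasDerivAt (integrand a · s) (-(x / (2 * s)) * integrand a x s) x := by
  refine ((((hasDerivAt_pow 2 x).neg.div_const (4 * s)).exp).const_mul (weight a s)).congr_deriv ?_
  simp only [integrand, Pi.neg_apply]
  ring

lemma norm_integrand_deriv_le (a x : ℝ) {s : ℝ} (hs : 0 < s) :
    ‖-(x / (2 * s)) * integrand a x s‖
      ≤ exp (-s) * s ^ (a - 1 - 1) / (2 * √(2 * π * exp 1)) := by
  have hsqrt : √(4 * π * s) * √(2 * exp 1 * s) = 2 * √(2 * π * exp 1) * s := by
    rw [← sqrt_mul (by positivity),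
      show 4 * π * s * (2 * exp 1 * s) = (2 * s) ^ 2 * (2 * π * exp 1) by ring,
      sqrt_mul (by positivity), sqrt_sq (by positivity)]
    ring
  calc ‖-(x / (2 * s)) * integrand a x s‖
      = weight a s * (|x| / (2 * s) * exp (-x ^ 2 / (4 * s))) := by
        simp only [integrand, norm_mul, norm_neg, norm_div, Real.norm_eq_abs,
          abs_of_nonneg (weight_nonneg a hs.le), abs_of_pos (exp_pos _), abs_of_pos hs, abs_two]
        ring
    _ ≤ weight a s * (1 / √(2 * exp 1 * s)) :=
        mul_le_mul_of_nonneg_left (abs_div_mul_exp_neg_sq_div_le hs x) (weight_nonneg a hs.le)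
    _ = exp (-s) * s ^ (a - 1 - 1) / (2 * √(2 * π * exp 1)) := by
        rw [weight_eq_div_sqrt a hs.le, div_mul_div_comm, mul_one, hsqrt,
          rpow_sub_one hs.ne' (a - 1)]
        field_simp

lemma integrableOn_integrand_deriv_bound {a : ℝ} (ha : 1 < a) :
    IntegrableOn (fun s => exp (-s) * s ^ (a - 1 - 1) / (2 * √(2 * π * exp 1))) (Ioi 0) :=
  (GammaIntegral_convergent (by linarith)).div_const _

lemma hasDerivAt_integral_integrand {a : ℝ} (ha : 1 < a) (x : ℝ) :
    HasDerivAt (fun x => ∫ s in Ioi 0, integrand a x s)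
      (∫ s in Ioi 0, -(x / (2 * s)) * integrand a x s) x := by
  have hderiv_meas : AEStronglyMeasurable (fun s => -(x / (2 * s)) * integrand a x s)
      (volume.restrict (Ioi 0)) :=
    (ContinuousOn.mul (ContinuousOn.neg (continuousOn_const.div (by fun_prop)
      fun t (ht : 0 < t) => by positivity)) (continuousOn_integrand a x)).aestronglyMeasurable
      measurableSet_Ioi
  refine (hasDerivAt_integral_of_dominated_loc_of_deriv_le Filter.univ_mem
    (Filter.Eventually.of_forall fun y => (integrableOn_integrand (by linarith) y).1)
    (integrableOn_integrand (by linarith) x) hderiv_meas ?_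
    (integrableOn_integrand_deriv_bound ha)
    (ae_of_all _ fun s y _ => hasDerivAt_integrand a s y)).2
  exact (ae_restrict_iff' measurableSet_Ioi).2
    (ae_of_all _ fun s hs y _ => norm_integrand_deriv_le a y hs)

lemma norm_integral_integrand_deriv_le {a : ℝ} (ha : 1 < a) (x : ℝ) :
    ‖∫ s in Ioi 0, -(x / (2 * s)) * integrand a x s‖
      ≤ Gamma (a - 1) / (2 * √(2 * π * exp 1)) := by
  rw [Gamma_eq_integral (by linarith), ← integral_div]
  exact norm_integral_le_of_norm_le (integrableOn_integrand_deriv_bound ha)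
    ((ae_restrict_iff' measurableSet_Ioi).2
      (ae_of_all _ fun s hs => norm_integrand_deriv_le a x hs))

lemma hasDerivAt {a : ℝ} (ha : 1 < a) (x : ℝ) :
    HasDerivAt (Gkernel a) (1 / Gamma a * ∫ s in Ioi 0, -(x / (2 * s)) * integrand a x s) x :=
  (hasDerivAt_integral_integrand ha x).const_mul _

end Gkernel

/-- For every `a > 1`, the kernel `G_a` is differentiable everywhere and its
derivative is uniformly bounded by `Γ(a - 1) / (2√(2πe) · Γ(a))`. -/
theorem Gkernel_differentiable_deriv_bounded (a : ℝ) (ha : 1 < a) :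
    (∀ x : ℝ, DifferentiableAt ℝ (Gkernel a) x) ∧
    (∀ x : ℝ, |deriv (Gkernel a) x|
      ≤ Real.Gamma (a - 1) / (2 * Real.sqrt (2 * Real.pi * Real.exp 1) * Real.Gamma a)) := by
  have hΓ : 0 < Gamma a := Gamma_pos_of_pos (by linarith)
  refine ⟨fun x => (Gkernel.hasDerivAt ha x).differentiableAt, fun x => ?_⟩
  rw [(Gkernel.hasDerivAt ha x).deriv, abs_mul, abs_of_pos (one_div_pos.2 hΓ), one_div_mul_eq_div,
    div_le_iff₀ hΓ, ← div_div, div_mul_cancel₀ _ hΓ.ne']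
  exact Gkernel.norm_integral_integrand_deriv_le ha x
end

section
/- Let a > 1 and let m ∈ L¹(ℝ). Then u = G_a * m is differentiable at every point of ℝ, its derivative is u′ = G_a′ * m, and ‖u′‖_{L^∞} ≤ C_a ‖m‖_{L¹} where C_a = Γ(a − 1) / (2√(2πe) · Γ(a)). (This is the estimate ‖u_x‖_{L^∞} ≤ C ‖m‖_{L¹} used to prove global existence.) -/
open MeasureTheory

/-!
`G_a` is a superposition over `s > 0` of heat kernels `(4πs)^(-1/2) e^(-x²/4s)` with weight
`s^(a-1) e^(-s) / Γ(a)`. Since `t e^(-t²) ≤ (2e)^(-1/2)`, the `x`-derivative of the heat kernel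
at time `s` is at most `(4πs)^(-1/2) (2es)^(-1/2)`, and integrating this against the weight gives
`|G_a'| ≤ Γ(a-1) / (2√(2πe) Γ(a))`, finite because `a > 1`. Domination then justifies
differentiating under both integrals, in `s` for `G_a` and in `y` for `G_a * m`, and
`|(G_a' * m)(x)| ≤ ‖G_a'‖_∞ ‖m‖₁`.
-/

open Set Real Filter

section Convolution

variable {μ : Measure ℝ} {m : ℝ → ℝ}

theorem abs_integral_mul_le_of_abs_le {f : ℝ → ℝ} {C : ℝ} (hf : ∀ y, |f y| ≤ C)
    (hm : Integrable m μ) : |∫ y, f y * m y ∂μ| ≤ C * ∫ y, |m y| ∂μ := by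
  rw [← integral_const_mul, ← Real.norm_eq_abs]
  refine norm_integral_le_of_norm_le (hm.abs.const_mul C) (ae_of_all _ fun y => ?_)
  rw [norm_mul, Real.norm_eq_abs]
  exact mul_le_mul_of_nonneg_right (hf y) (abs_nonneg _)

theorem hasDerivAt_integral_comp_sub_mul {g : ℝ → ℝ} {B C : ℝ} (hg : Differentiable ℝ g)
    (hgB : ∀ x, |g x| ≤ B) (hg'C : ∀ x, |deriv g x| ≤ C) (hm : Integrable m μ) (x : ℝ) :
    HasDerivAt (fun z => ∫ y, g (z - y) * m y ∂μ) (∫ y, deriv g (x - y) * m y ∂μ) x := by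
  have hmeas {f : ℝ → ℝ} (hf : Measurable f) (z : ℝ) :
      AEStronglyMeasurable (fun y => f (z - y) * m y) μ :=
    (hf.comp (measurable_const.sub measurable_id)).aestronglyMeasurable.mul
      hm.aestronglyMeasurable
  have hbound {f : ℝ → ℝ} {c : ℝ} (hf : ∀ x, |f x| ≤ c) (z y : ℝ) :
      ‖f (z - y) * m y‖ ≤ c * |m y| := by
    rw [norm_mul, Real.norm_eq_abs]
    exact mul_le_mul_of_nonneg_right (hf _) (abs_nonneg _)
  have hint : Integrable (fun y => g (x - y) * m y) μ :=
    (hm.abs.const_mul B).mono' (hmeas hg.continuous.measurable x) (ae_of_all _ (hbound hgB x))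
  exact (hasDerivAt_integral_of_dominated_loc_of_deriv_le (F := fun z y => g (z - y) * m y)
    univ_mem (Eventually.of_forall (hmeas hg.continuous.measurable)) hint
    (hmeas (measurable_deriv g) x) (ae_of_all _ fun y z _ => hbound hg'C z y)
    (hm.abs.const_mul C)
    (ae_of_all _ fun y z _ => ((hg (z - y)).hasDerivAt.comp_sub_const z y).mul_const (m y))).2

end Convolution

theorem abs_mul_exp_neg_sq_le (t : ℝ) : |t * exp (-t ^ 2)| ≤ (√(2 * exp 1))⁻¹ := by
  rw [← sqrt_inv]
  refine abs_le_sqrt ?_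
  have h := add_one_le_exp (2 * t ^ 2 - 1)
  calc (t * exp (-t ^ 2)) ^ 2 = 2 * t ^ 2 * exp (-(2 * t ^ 2)) / 2 := by
        rw [mul_pow, ← exp_nat_mul]; ring_nf
    _ ≤ exp (2 * t ^ 2 - 1) * exp (-(2 * t ^ 2)) / 2 := by gcongr; linarith
    _ = (2 * exp 1)⁻¹ := by rw [← exp_add, mul_inv, ← exp_neg]; ring_nf

theorem hasDerivAt_exp_neg_sq_div (s x : ℝ) :
    HasDerivAt (fun x => exp (-x ^ 2 / (4 * s)))
      (exp (-x ^ 2 / (4 * s)) * (-(2 * x) / (4 * s))) x := by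
  have h := ((hasDerivAt_pow 2 x).fun_neg.div_const (4 * s)).exp
  convert h using 1
  push_cast; ring

theorem abs_exp_neg_sq_div_mul_le {s : ℝ} (hs : 0 < s) (x : ℝ) :
    |exp (-x ^ 2 / (4 * s)) * (-(2 * x) / (4 * s))| ≤ (√(2 * exp 1))⁻¹ * (√s)⁻¹ := by
  have hsqrt : 0 < √s := sqrt_pos.2 hs
  set t := x / (2 * √s)
  have ht : -x ^ 2 / (4 * s) = -t ^ 2 := by
    rw [div_pow, mul_pow, sq_sqrt hs.le]; ring
  have heq : exp (-x ^ 2 / (4 * s)) * (-(2 * x) / (4 * s)) = -(t * exp (-t ^ 2)) * (√s)⁻¹ := by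
    rw [ht]; simp only [t]; field_simp; rw [sq_sqrt hs.le]; ring
  rw [heq, abs_mul, abs_neg, abs_inv, abs_of_pos hsqrt]
  gcongr
  exact abs_mul_exp_neg_sq_le t

noncomputable def subordinationWeight (a s : ℝ) : ℝ :=
  s ^ (a - 1) * exp (-s) * (4 * π * s) ^ (-(1 / 2) : ℝ)

theorem subordinationWeight_eq {a s : ℝ} (hs : 0 < s) :
    subordinationWeight a s = (2 * √π)⁻¹ * (exp (-s) * s ^ (a - 1 / 2 - 1)) := by
  have h4 : √4 = 2 := by rw [show (4 : ℝ) = 2 ^ 2 by norm_num, sqrt_sq zero_le_two]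
  rw [subordinationWeight, mul_rpow (by positivity) hs.le, rpow_neg (by positivity),
    ← sqrt_eq_rpow, sqrt_mul zero_le_four, h4, show a - 1 / 2 - 1 = a - 1 + -(1 / 2) by ring,
    rpow_add hs]
  ring

theorem subordinationWeight_mul_inv_sqrt {a s : ℝ} (hs : 0 < s) :
    subordinationWeight a s * (√s)⁻¹ = (2 * √π)⁻¹ * (exp (-s) * s ^ (a - 1 - 1)) := by
  rw [subordinationWeight_eq hs, sqrt_eq_rpow s, ← rpow_neg hs.le,
    show a - 1 - 1 = a - 1 / 2 - 1 + -(1 / 2) by ring, rpow_add hs]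
  ring

theorem subordinationWeight_nonneg (a : ℝ) {s : ℝ} (hs : 0 < s) :
    0 ≤ subordinationWeight a s := by
  unfold subordinationWeight; positivity

theorem abs_subordinationWeight_mul_exp_le {a s : ℝ} (hs : 0 < s) (x : ℝ) :
    |subordinationWeight a s * exp (-x ^ 2 / (4 * s))| ≤
      (2 * √π)⁻¹ * (exp (-s) * s ^ (a - 1 / 2 - 1)) := by
  have hexp : exp (-x ^ 2 / (4 * s)) ≤ 1 :=
    exp_le_one_iff.2 (div_nonpos_of_nonpos_of_nonneg (neg_nonpos.2 (sq_nonneg x)) (by positivity))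
  rw [abs_mul, abs_of_nonneg (subordinationWeight_nonneg a hs), abs_of_pos (exp_pos _),
    ← subordinationWeight_eq hs]
  exact mul_le_of_le_one_right (subordinationWeight_nonneg a hs) hexp

theorem abs_subordinationWeight_mul_deriv_le {a s : ℝ} (hs : 0 < s) (x : ℝ) :
    |subordinationWeight a s * (exp (-x ^ 2 / (4 * s)) * (-(2 * x) / (4 * s)))| ≤
      (√(2 * exp 1))⁻¹ * (2 * √π)⁻¹ * (exp (-s) * s ^ (a - 1 - 1)) := by
  have hw := subordinationWeight_nonneg a hs
  calc _ = subordinationWeight a s * |exp (-x ^ 2 / (4 * s)) * (-(2 * x) / (4 * s))| := by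
        rw [abs_mul, abs_of_nonneg hw]
    _ ≤ subordinationWeight a s * ((√(2 * exp 1))⁻¹ * (√s)⁻¹) :=
        mul_le_mul_of_nonneg_left (abs_exp_neg_sq_div_mul_le hs x) hw
    _ = _ := by
        rw [mul_left_comm, subordinationWeight_mul_inv_sqrt hs]
        ring

theorem integrableOn_gammaIntegrand_const_mul (c : ℝ) {b : ℝ} (hb : 0 < b) :
    IntegrableOn (fun s => c * (exp (-s) * s ^ (b - 1))) (Ioi 0) :=
  (GammaIntegral_convergent hb).const_mul c

theorem abs_setIntegral_Ioi_le_const_mul_Gamma {f : ℝ → ℝ} {c b : ℝ} (hb : 0 < b)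
    (hf : ∀ s, 0 < s → |f s| ≤ c * (exp (-s) * s ^ (b - 1))) :
    |∫ s in Ioi 0, f s| ≤ c * Gamma b := by
  rw [Gamma_eq_integral hb, ← integral_const_mul, ← Real.norm_eq_abs]
  exact norm_integral_le_of_norm_le (integrableOn_gammaIntegrand_const_mul c hb)
    ((ae_restrict_iff' measurableSet_Ioi).2 (ae_of_all _ hf))

section Gkernel

variable {a : ℝ}

theorem hasDerivAt_Gkernel (ha : 1 < a) (x : ℝ) :
    HasDerivAt (Gkernel a) (1 / Gamma a * ∫ s in Ioi 0,
      subordinationWeight a s * (exp (-x ^ 2 / (4 * s)) * (-(2 * x) / (4 * s)))) x := by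
  have hmeas (z : ℝ) : AEStronglyMeasurable
      (fun s => subordinationWeight a s * exp (-z ^ 2 / (4 * s))) (volume.restrict (Ioi 0)) := by
    unfold subordinationWeight; fun_prop
  have hint : IntegrableOn (fun s => subordinationWeight a s * exp (-x ^ 2 / (4 * s))) (Ioi 0) :=
    (integrableOn_gammaIntegrand_const_mul _ (by linarith : 0 < a - 1 / 2)).mono' (hmeas x)
      ((ae_restrict_iff' measurableSet_Ioi).2
        (ae_of_all _ fun s hs => abs_subordinationWeight_mul_exp_le hs x))
  have hderiv := hasDerivAt_integral_of_dominated_loc_of_deriv_le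
    (F := fun z s => subordinationWeight a s * exp (-z ^ 2 / (4 * s)))
    (F' := fun z s => subordinationWeight a s * (exp (-z ^ 2 / (4 * s)) * (-(2 * z) / (4 * s))))
    univ_mem (Eventually.of_forall hmeas) hint (by unfold subordinationWeight; fun_prop)
    ((ae_restrict_iff' measurableSet_Ioi).2
      (ae_of_all _ fun s hs z _ => abs_subordinationWeight_mul_deriv_le hs z))
    (integrableOn_gammaIntegrand_const_mul _ (by linarith : 0 < a - 1))
    (ae_of_all _ fun s z _ => (hasDerivAt_exp_neg_sq_div s z).const_mul _)
  exact hderiv.2.const_mul (1 / Gamma a)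

theorem differentiable_Gkernel (ha : 1 < a) : Differentiable ℝ (Gkernel a) :=
  fun x => (hasDerivAt_Gkernel ha x).differentiableAt

theorem abs_Gkernel_le (ha : 1 / 2 < a) (x : ℝ) :
    |Gkernel a x| ≤ 1 / Gamma a * ((2 * √π)⁻¹ * Gamma (a - 1 / 2)) := by
  have hΓ : 0 < 1 / Gamma a := one_div_pos.2 (Gamma_pos_of_pos (by linarith))
  rw [Gkernel, abs_mul, abs_of_pos hΓ]
  gcongr
  exact abs_setIntegral_Ioi_le_const_mul_Gamma (by linarith)
    fun s hs => abs_subordinationWeight_mul_exp_le hs x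

theorem abs_deriv_Gkernel_le (ha : 1 < a) (x : ℝ) :
    |deriv (Gkernel a) x| ≤ Gamma (a - 1) / (2 * √(2 * π * exp 1) * Gamma a) := by
  have hΓ : 0 < 1 / Gamma a := one_div_pos.2 (Gamma_pos_of_pos (by linarith))
  rw [(hasDerivAt_Gkernel ha x).deriv, abs_mul, abs_of_pos hΓ]
  calc _ ≤ 1 / Gamma a * ((√(2 * exp 1))⁻¹ * (2 * √π)⁻¹ * Gamma (a - 1)) := by
        gcongr
        exact abs_setIntegral_Ioi_le_const_mul_Gamma (by linarith)
          fun s hs => abs_subordinationWeight_mul_deriv_le hs x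
    _ = _ := by
        rw [show 2 * π * exp 1 = π * (2 * exp 1) by ring, sqrt_mul pi_pos.le]
        ring

end Gkernel

/-- For `a > 1` and `m ∈ L¹(ℝ)`, the function `u = G_a * m` is differentiable
everywhere with derivative `u' = G_a' * m`, and `‖u'‖_{L^∞} ≤ C_a ‖m‖_{L¹}` with
`C_a = Γ(a - 1) / (2√(2πe) · Γ(a))`. -/
theorem deriv_convolution_Gkernel_bound (a : ℝ) (ha : 1 < a)
    (m : ℝ → ℝ) (hm : Integrable m) :
    (∀ x : ℝ, HasDerivAt (fun z => ∫ y, Gkernel a (z - y) * m y)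
      (∫ y, deriv (Gkernel a) (x - y) * m y) x) ∧
    (∀ x : ℝ, |∫ y, deriv (Gkernel a) (x - y) * m y|
      ≤ (Real.Gamma (a - 1) / (2 * Real.sqrt (2 * Real.pi * Real.exp 1) * Real.Gamma a)) *
        ∫ y, |m y|) :=
  ⟨hasDerivAt_integral_comp_sub_mul (differentiable_Gkernel ha) (abs_Gkernel_le (by linarith))
      (abs_deriv_Gkernel_le ha) hm,
    fun x => abs_integral_mul_le_of_abs_le (fun y => abs_deriv_Gkernel_le ha (x - y)) hm⟩
end

section
/- Let G ∈ L¹(ℝ) be even (G(−x) = G(x) for all x), let m be a Schwartz function on ℝ, and set u = G * m. Then ∫_ℝ ( u(x) m′(x) + 2 u′(x) m(x) ) dx = 0. Consequently, for a solution of m_t + u m_x + 2 u_x m = 0 with u = G * m, the spatial integral of the right-hand side of ∂_t m = −(u m_x + 2 u_x m) vanishes. -/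
/-!
Write `u = G ⋆ m`. Integration by parts gives `∫ u m' = -∫ u' m`. On the other hand
`u' = G ⋆ m'`, and since `G` is even, convolution with `G` is a symmetric operator:
`∫ (G ⋆ m') m = ∫ (G ⋆ m) m'`. Hence `∫ u' m = ∫ u m' = -∫ u' m`, so both vanish and
`∫ (u m' + 2 u' m) = 0`.
-/

open MeasureTheory ContinuousLinearMap
open scoped Convolution

theorem MeasureTheory.Integrable.mul_schwartzMap {E : Type*} [NormedAddCommGroup E]
    [NormedSpace ℝ E] [MeasurableSpace E] [OpensMeasurableSpace E] {μ : Measure E}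
    {f : E → ℝ} (hf : Integrable f μ) (g : SchwartzMap E ℝ) :
    Integrable (fun x => f x * g x) μ :=
  hf.mul_bdd g.continuous.aestronglyMeasurable (.of_forall (SchwartzMap.norm_le_seminorm ℝ g))

section Convolution

variable {G f g : ℝ → ℝ} {C C' : ℝ}

theorem convolution_mul_apply_eq_integral_sub (G f : ℝ → ℝ) (x : ℝ) :
    (G ⋆[mul ℝ ℝ] f) x = ∫ y, G (x - y) * f y :=
  convolution_eq_swap _

theorem hasDerivAt_convolution_mul (hG : Integrable G) (hf : Differentiable ℝ f)
    (hf_bdd : ∀ x, ‖f x‖ ≤ C) (hf'_bdd : ∀ x, ‖deriv f x‖ ≤ C') (x : ℝ) :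
    HasDerivAt (G ⋆[mul ℝ ℝ] f) ((G ⋆[mul ℝ ℝ] deriv f) x) x := by
  have hf_meas (z : ℝ) : AEStronglyMeasurable (fun t => f (z - t)) :=
    (hf.continuous.comp (continuous_sub_left z)).aestronglyMeasurable
  have hf'_meas : AEStronglyMeasurable (fun t => deriv f (x - t)) :=
    ((measurable_deriv f).comp (measurable_const.sub measurable_id)).aestronglyMeasurable
  refine (hasDerivAt_integral_of_dominated_loc_of_deriv_le
    (F := fun z t => G t * f (z - t)) (F' := fun z t => G t * deriv f (z - t))
    (bound := fun t => ‖G t‖ * C') Filter.univ_mem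
    (.of_forall fun z => hG.aestronglyMeasurable.mul (hf_meas z))
    (hG.mul_bdd (hf_meas x) (.of_forall fun t => hf_bdd (x - t)))
    (hG.aestronglyMeasurable.mul hf'_meas) (.of_forall fun t z _ => ?_) (hG.norm.mul_const C')
    (.of_forall fun t z _ => ?_)).2
  · rw [norm_mul]
    exact mul_le_mul_of_nonneg_left (hf'_bdd _) (norm_nonneg _)
  · simpa using ((hf _).hasDerivAt.comp z ((hasDerivAt_id z).sub_const t)).const_mul (G t)

theorem integral_convolution_mul (hG : Integrable G) (hf : Integrable f)
    (hg : AEStronglyMeasurable g) (hg_bdd : ∀ x, ‖g x‖ ≤ C) :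
    ∫ x, (G ⋆[mul ℝ ℝ] f) x * g x = ∫ t, G t * ∫ x, f (x - t) * g x := by
  have hint : Integrable (fun p : ℝ × ℝ => G p.2 * f (p.1 - p.2) * g p.1) (volume.prod volume) :=
    (hG.convolution_integrand (mul ℝ ℝ) hf).mul_bdd hg.comp_fst (.of_forall fun p => hg_bdd p.1)
  simp only [convolution_mul, ← integral_mul_const]
  rw [integral_integral_swap hint]
  simp only [mul_assoc, integral_const_mul]

theorem integral_convolution_mul_comm (hG : Integrable G) (hG_even : ∀ x, G (-x) = G x)
    (hf : Integrable f) (hg : Integrable g) (hf_bdd : ∀ x, ‖f x‖ ≤ C)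
    (hg_bdd : ∀ x, ‖g x‖ ≤ C') :
    ∫ x, (G ⋆[mul ℝ ℝ] f) x * g x = ∫ x, (G ⋆[mul ℝ ℝ] g) x * f x := by
  rw [integral_convolution_mul hG hf hg.aestronglyMeasurable hg_bdd,
    integral_convolution_mul hG hg hf.aestronglyMeasurable hf_bdd, ← integral_neg_eq_self]
  congr 1 with t
  rw [hG_even, ← integral_add_right_eq_self (fun x => g (x - t) * f x) t]
  simp [mul_comm]

end Convolution

/-- For an even integrable kernel `G` and a Schwartz function `m`, with
`u = G * m`, one has `∫ (u m' + 2 u' m) dx = 0`. Hence the spatial integral of the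
right-hand side of `∂ₜ m = -(u m_x + 2 u_x m)` vanishes. -/
theorem integral_transport_rhs_eq_zero (G : ℝ → ℝ)
    (hG : Integrable G) (hGeven : ∀ x : ℝ, G (-x) = G x)
    (m : SchwartzMap ℝ ℝ) :
    ∫ x : ℝ, ((∫ y : ℝ, G (x - y) * m y) * deriv (fun z => m z) x
      + 2 * deriv (fun z => ∫ y : ℝ, G (z - y) * m y) x * m x) = 0 := by
  set m' := SchwartzMap.derivCLM ℝ ℝ m
  have hm' : deriv m = m' := funext fun x => (SchwartzMap.derivCLM_apply ℝ m x).symm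
  have hm_bdd := SchwartzMap.norm_le_seminorm ℝ m
  have hm'_bdd := SchwartzMap.norm_le_seminorm ℝ m'
  set u := G ⋆[mul ℝ ℝ] m
  have hu_eq : (fun z => ∫ y, G (z - y) * m y) = u :=
    funext fun z => (convolution_mul_apply_eq_integral_sub G m z).symm
  have hu' (x : ℝ) : HasDerivAt u ((G ⋆[mul ℝ ℝ] m') x) x := by
    simpa [hm'] using hasDerivAt_convolution_mul hG m.differentiable hm_bdd (hm' ▸ hm'_bdd) x
  have hu_int : Integrable u := hG.integrable_convolution _ m.integrable
  have hu'_int : Integrable (G ⋆[mul ℝ ℝ] m') := hG.integrable_convolution _ m'.integrable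
  have ibp : ∫ x, u x * m' x = -∫ x, (G ⋆[mul ℝ ℝ] m') x * m x :=
    integral_mul_deriv_eq_deriv_mul_of_integrable (fun x _ => hu' x)
      (fun x _ => hm' ▸ m.differentiableAt.hasDerivAt) (hu_int.mul_schwartzMap m')
      (hu'_int.mul_schwartzMap m) (hu_int.mul_schwartzMap m)
  have symm : ∫ x, (G ⋆[mul ℝ ℝ] m') x * m x = ∫ x, u x * m' x :=
    integral_convolution_mul_comm hG hGeven m'.integrable m.integrable hm'_bdd hm_bdd
  rw [hu_eq]
  simp only [(hu' _).deriv, ← convolution_mul_apply_eq_integral_sub, hm', mul_assoc]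
  rw [integral_add (hu_int.mul_schwartzMap m') ((hu'_int.mul_schwartzMap m).const_mul 2),
    integral_const_mul]
  linarith
end

section
/- Let T > 0, let u : ℝ × ℝ → ℝ be continuous with continuous spatial derivative ∂ₓu, and let m : ℝ × ℝ → ℝ be differentiable and satisfy ∂ₜm + u ∂ₓm + 2 (∂ₓu) m = 0 on [0,T) × ℝ. Fix ξ ∈ ℝ and let q : [0,T) → ℝ be differentiable with q(0) = ξ and q′(t) = u(t, q(t)). Then for every t ∈ [0,T): m(t, q(t)) ≥ 0 if and only if m(0, ξ) ≥ 0, and m(t, q(t)) ≤ 0 if and only if m(0, ξ) ≤ 0; in particular the sign of m is preserved along characteristics. -/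
/-!
Along a characteristic the chain rule turns the transport equation into the linear ODE
`f' = -g f` for `f(s) = m(s, q(s))` with continuous coefficient `g(s) = 2 ∂ₓu(s, q(s))`.
Hence `f(s) exp(∫₀ˢ g)` has zero derivative, so `m(t, q(t)) exp(∫₀ᵗ g) = m(0, ξ)`, and a
positive factor does not change signs.
-/

open Set Real

theorem hasDerivAt_along_graph {m : ℝ → ℝ → ℝ} {q : ℝ → ℝ} {s v : ℝ}
    (hm : DifferentiableAt ℝ (fun p : ℝ × ℝ => m p.1 p.2) (s, q s)) (hq : HasDerivAt q v s) :
    HasDerivAt (fun r => m r (q r)) (deriv (fun r => m r (q s)) s + v * deriv (m s) (q s)) s := by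
  set F : ℝ × ℝ → ℝ := fun p => m p.1 p.2
  set L := fderiv ℝ F (s, q s)
  have hF : HasFDerivAt F L (s, q s) := hm.hasFDerivAt
  have h_time : deriv (fun r => m r (q s)) s = L (1, 0) :=
    (hF.comp_hasDerivAt (l := F) s ((hasDerivAt_id s).prodMk (hasDerivAt_const s (q s)))).deriv
  have h_space : deriv (m s) (q s) = L (0, 1) :=
    (hF.comp_hasDerivAt (l := F) (q s)
      ((hasDerivAt_const (q s) s).prodMk (hasDerivAt_id (q s)))).deriv
  have h_split : L (1, v) = L (1, 0) + v * L (0, 1) := by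
    rw [← smul_eq_mul, ← L.map_smul, ← L.map_add, Prod.smul_mk, Prod.mk_add_mk]
    simp
  rw [h_time, h_space, ← h_split]
  exact hF.comp_hasDerivAt s ((hasDerivAt_id s).prodMk hq)

theorem mul_exp_integral_eq_of_hasDerivAt_eq_neg_mul {f g : ℝ → ℝ} {a b : ℝ} (hab : a ≤ b)
    (hg : ContinuousOn g (Icc a b)) (hf : ∀ s ∈ Icc a b, HasDerivAt f (-(g s * f s)) s) :
    f b * exp (∫ s in a..b, g s) = f a := by
  -- extend `g` continuously to all of `ℝ` so that its primitive is differentiable everywhere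
  set g' : ℝ → ℝ := fun s => g (projIcc a b hab s)
  have hg' : Continuous g' :=
    hg.comp_continuous continuous_projIcc.subtype_val fun s => (projIcc a b hab s).2
  have hg'_eq : EqOn g' g (Icc a b) := fun s hs => by simp only [g', projIcc_of_mem hab hs]
  set H : ℝ → ℝ := fun s => f s * exp (∫ r in a..s, g' r)
  have hH : ∀ s ∈ Icc a b, HasDerivAt H 0 s := fun s hs => by
    have := (hf s hs).mul (hg'.integral_hasStrictDerivAt a s).hasDerivAt.exp
    rwa [hg'_eq hs, show -(g s * f s) * exp (∫ r in a..s, g' r)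
      + f s * (exp (∫ r in a..s, g' r) * g s) = 0 by ring] at this
  have hH_const : H b = H a :=
    constant_of_has_deriv_right_zero (fun s hs => (hH s hs).continuousAt.continuousWithinAt)
      (fun s hs => (hH s (Ico_subset_Icc_self hs)).hasDerivWithinAt) b (right_mem_Icc.2 hab)
  have h_int : ∫ s in a..b, g' s = ∫ s in a..b, g s :=
    intervalIntegral.integral_congr (by rwa [uIcc_of_le hab])
  simpa only [H, h_int, intervalIntegral.integral_same, exp_zero, mul_one] using hH_const

theorem nonneg_iff_and_nonpos_iff_of_mul_pos_eq {R : Type*} [Ring R] [LinearOrder R]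
    [IsStrictOrderedRing R] {a b c : R} (hc : 0 < c) (h : a * c = b) :
    (0 ≤ a ↔ 0 ≤ b) ∧ (a ≤ 0 ↔ b ≤ 0) := by
  subst h
  exact ⟨(mul_nonneg_iff_of_pos_right hc).symm, by
    simpa only [zero_mul] using (mul_le_mul_iff_of_pos_right (b := a) (c := 0) hc).symm⟩

theorem sign_preserved_along_characteristic_general (T : ℝ)
    (u m : ℝ → ℝ → ℝ)
    (hux : Continuous fun p : ℝ × ℝ => deriv (u p.1) p.2)
    (hm : Differentiable ℝ fun p : ℝ × ℝ => m p.1 p.2)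
    (heq : ∀ t ∈ Set.Ico (0 : ℝ) T, ∀ x : ℝ,
      deriv (fun s => m s x) t + u t x * deriv (m t) x + 2 * deriv (u t) x * m t x = 0)
    (ξ : ℝ) (q : ℝ → ℝ) (hq0 : q 0 = ξ)
    (hq : ∀ t ∈ Set.Ico (0 : ℝ) T, HasDerivAt q (u t (q t)) t) :
    ∀ t ∈ Set.Ico (0 : ℝ) T,
      (0 ≤ m t (q t) ↔ 0 ≤ m 0 ξ) ∧ (m t (q t) ≤ 0 ↔ m 0 ξ ≤ 0) := by
  rintro t ⟨ht0, htT⟩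
  have h_sub : Icc 0 t ⊆ Ico 0 T := Icc_subset_Ico_right htT
  have h_ode : ∀ s ∈ Icc 0 t,
      HasDerivAt (fun r => m r (q r)) (-(2 * deriv (u s) (q s) * m s (q s))) s := fun s hs => by
    convert hasDerivAt_along_graph (hm (s, q s)) (hq s (h_sub hs)) using 1
    linarith [heq s (h_sub hs) (q s)]
  have h_coeff : ContinuousOn (fun s => 2 * deriv (u s) (q s)) (Icc 0 t) := fun s hs =>
    (continuousAt_const.mul (hux.continuousAt.comp
      (continuousAt_id.prodMk (hq s (h_sub hs)).continuousAt))).continuousWithinAt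
  have h_transport := mul_exp_integral_eq_of_hasDerivAt_eq_neg_mul ht0 h_coeff h_ode
  rw [hq0] at h_transport
  exact nonneg_iff_and_nonpos_iff_of_mul_pos_eq (exp_pos _) h_transport

/-- The sign of the momentum `m` is preserved along characteristics of the transport
equation `∂ₜm + u ∂ₓm + 2 ∂ₓu m = 0`: for every `t ∈ [0,T)`, `m(t, q(t)) ≥ 0` iff
`m(0, ξ) ≥ 0`, and `m(t, q(t)) ≤ 0` iff `m(0, ξ) ≤ 0`. -/
theorem sign_preserved_along_characteristic (T : ℝ) (hT : 0 < T)
    (u m : ℝ → ℝ → ℝ)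
    (hu : Continuous fun p : ℝ × ℝ => u p.1 p.2)
    (hux : Continuous fun p : ℝ × ℝ => deriv (u p.1) p.2)
    (hm : Differentiable ℝ fun p : ℝ × ℝ => m p.1 p.2)
    (heq : ∀ t ∈ Set.Ico (0 : ℝ) T, ∀ x : ℝ,
      deriv (fun s => m s x) t + u t x * deriv (m t) x + 2 * deriv (u t) x * m t x = 0)
    (ξ : ℝ) (q : ℝ → ℝ) (hq0 : q 0 = ξ)
    (hq : ∀ t ∈ Set.Ico (0 : ℝ) T, HasDerivAt q (u t (q t)) t) :
    ∀ t ∈ Set.Ico (0 : ℝ) T,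
      (0 ≤ m t (q t) ↔ 0 ≤ m 0 ξ) ∧ (m t (q t) ≤ 0 ↔ m 0 ξ ≤ 0) :=
  sign_preserved_along_characteristic_general T u m hux hm heq ξ q hq0 hq
end

section
/- Let T > 0, let u : ℝ × ℝ → ℝ be continuous with continuous spatial derivative ∂ₓu, and let m : ℝ × ℝ → ℝ be differentiable and satisfy ∂ₜm + u ∂ₓm + 2 (∂ₓu) m = 0 on [0,T) × ℝ. Assume that for every ξ ∈ ℝ there is a differentiable characteristic q(·, ξ) : [0,T) → ℝ with q(0, ξ) = ξ and ∂ₜq(t, ξ) = u(t, q(t, ξ)), and that for each t ∈ [0,T) the flow map ξ ↦ q(t, ξ) is surjective onto ℝ. If m(0, x) ≥ 0 for all x ∈ ℝ, then m(t, x) ≥ 0 for all (t, x) ∈ [0,T) × ℝ; likewise, if m(0, x) ≤ 0 for all x, then m(t, x) ≤ 0 for all (t, x). -/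
/-!
Along a characteristic `γ = q(·, ξ)` the chain rule turns the transport equation into the linear
ODE `d/dt m(t, γ t) = -2 uₓ(t, γ t) m(t, γ t)`, whose coefficient is continuous because `uₓ` is.
The integrating factor gives `m(t, q(t, ξ)) = exp (-2 ∫₀ᵗ uₓ(s, q(s, ξ)) ds) · m(0, ξ)`, so the sign of
`m(0, ξ)` is carried along the characteristic, and surjectivity of the flow reaches every point.
-/

open Set Real

theorem eq_exp_integral_mul_of_hasDerivWithinAt {α f : ℝ → ℝ} {a b : ℝ} (hab : a ≤ b)
    (hα : ContinuousOn α (Icc a b))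
    (hf : ∀ t ∈ Icc a b, HasDerivWithinAt f (α t * f t) (Icc a b) t) :
    f b = exp (∫ s in a..b, α s) * f a := by
  set G : ℝ → ℝ := fun t => ∫ s in a..t, α s
  have hG : ∀ t ∈ Icc a b, HasDerivWithinAt G (α t) (Icc a b) t := by
    intro t ht
    have : Fact (t ∈ Icc a b) := ⟨ht⟩
    exact intervalIntegral.integral_hasDerivWithinAt_right
      ((hα.mono (uIcc_subset_Icc (left_mem_Icc.2 hab) ht)).intervalIntegrable)
      (hα.stronglyMeasurableAtFilter_nhdsWithin measurableSet_Icc t) (hα t ht)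
  have hderiv : ∀ t ∈ Icc a b, HasDerivWithinAt (fun s => exp (-G s) * f s) 0 (Icc a b) t := by
    intro t ht
    exact ((hG t ht).neg.exp.mul (hf t ht)).congr_deriv (by simp only [Pi.neg_apply]; ring)
  have hconst := constant_of_derivWithin_zero
    (fun t ht => (hderiv t ht).differentiableWithinAt)
    (fun t ht => (hderiv t (Ico_subset_Icc_self ht)).derivWithin
      (uniqueDiffOn_Icc (ht.1.trans_lt ht.2) t (Ico_subset_Icc_self ht)))
    b (right_mem_Icc.2 hab)
  simp only [G, intervalIntegral.integral_same, neg_zero, exp_zero, one_mul] at hconst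
  rw [← hconst, ← mul_assoc, ← exp_add, add_neg_cancel, exp_zero, one_mul]

theorem hasDerivAt_comp_curve {m : ℝ → ℝ → ℝ} {γ : ℝ → ℝ} {t v : ℝ}
    (hm : DifferentiableAt ℝ (fun p : ℝ × ℝ => m p.1 p.2) (t, γ t)) (hγ : HasDerivAt γ v t) :
    HasDerivAt (fun s => m s (γ s)) (deriv (fun s => m s (γ t)) t + v * deriv (m t) (γ t)) t := by
  set L := fderiv ℝ (fun p : ℝ × ℝ => m p.1 p.2) (t, γ t)
  have hL := hm.hasFDerivAt
  have ht : deriv (fun s => m s (γ t)) t = L (1, 0) :=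
    (hL.comp_hasDerivAt (f := fun s => (s, γ t)) t
      ((hasDerivAt_id t).prodMk (hasDerivAt_const t (γ t)))).deriv
  have hx : deriv (m t) (γ t) = L (0, 1) :=
    (hL.comp_hasDerivAt (f := fun y => (t, y)) (γ t)
      ((hasDerivAt_const (γ t) t).prodMk (hasDerivAt_id (γ t)))).deriv
  have hsplit : ((1 : ℝ), v) = (1, 0) + v • ((0 : ℝ), (1 : ℝ)) := by simp
  refine (hL.comp_hasDerivAt (f := fun s => (s, γ s)) t
    ((hasDerivAt_id t).prodMk hγ)).congr_deriv ?_
  rw [ht, hx, hsplit, map_add, map_smul, smul_eq_mul]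

theorem momentum_along_characteristic {u m : ℝ → ℝ → ℝ} {γ : ℝ → ℝ} {a b : ℝ} (hab : a ≤ b)
    (hux : Continuous fun p : ℝ × ℝ => deriv (u p.1) p.2)
    (hm : Differentiable ℝ fun p : ℝ × ℝ => m p.1 p.2)
    (heq : ∀ t ∈ Icc a b, deriv (fun s => m s (γ t)) t + u t (γ t) * deriv (m t) (γ t)
      + 2 * deriv (u t) (γ t) * m t (γ t) = 0)
    (hγ : ∀ t ∈ Icc a b, HasDerivAt γ (u t (γ t)) t) :
    m b (γ b) = exp (∫ s in a..b, -2 * deriv (u s) (γ s)) * m a (γ a) := by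
  have hγc : ContinuousOn γ (Icc a b) := fun t ht => (hγ t ht).continuousAt.continuousWithinAt
  refine eq_exp_integral_mul_of_hasDerivWithinAt (α := fun s => -2 * deriv (u s) (γ s))
    (f := fun s => m s (γ s)) hab (continuousOn_const.mul (hux.comp_continuousOn (continuousOn_id.prodMk hγc))) fun t ht => ?_
  refine ((hasDerivAt_comp_curve (hm _) (hγ t ht)).congr_deriv ?_).hasDerivWithinAt
  linarith [heq t ht]

theorem sign_preservation_of_momentum_general (T : ℝ)
    (u m : ℝ → ℝ → ℝ)
    (hux : Continuous fun p : ℝ × ℝ => deriv (u p.1) p.2)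
    (hm : Differentiable ℝ fun p : ℝ × ℝ => m p.1 p.2)
    (heq : ∀ t ∈ Set.Ico (0 : ℝ) T, ∀ x : ℝ,
      deriv (fun s => m s x) t + u t x * deriv (m t) x + 2 * deriv (u t) x * m t x = 0)
    (q : ℝ → ℝ → ℝ)
    (hq0 : ∀ ξ : ℝ, q 0 ξ = ξ)
    (hq : ∀ ξ : ℝ, ∀ t ∈ Set.Ico (0 : ℝ) T,
      HasDerivAt (fun s => q s ξ) (u t (q t ξ)) t)
    (hsurj : ∀ t ∈ Set.Ico (0 : ℝ) T, Function.Surjective (q t)) :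
    ((∀ x : ℝ, 0 ≤ m 0 x) → ∀ t ∈ Set.Ico (0 : ℝ) T, ∀ x : ℝ, 0 ≤ m t x) ∧
    ((∀ x : ℝ, m 0 x ≤ 0) → ∀ t ∈ Set.Ico (0 : ℝ) T, ∀ x : ℝ, m t x ≤ 0) := by
  have hflow : ∀ t ∈ Ico (0 : ℝ) T, ∀ ξ, ∃ c > 0, m t (q t ξ) = c * m 0 ξ := by
    intro t ht ξ
    have hsub : Icc 0 t ⊆ Ico 0 T := Icc_subset_Ico_right ht.2
    have h := momentum_along_characteristic ht.1 hux hm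
      (fun s hs => heq s (hsub hs) _) (fun s hs => hq ξ s (hsub hs))
    rw [hq0] at h
    exact ⟨_, exp_pos _, h⟩
  constructor
  · intro h0 t ht x
    obtain ⟨ξ, rfl⟩ := hsurj t ht x
    obtain ⟨c, hc, hmc⟩ := hflow t ht ξ
    exact hmc ▸ mul_nonneg hc.le (h0 ξ)
  · intro h0 t ht x
    obtain ⟨ξ, rfl⟩ := hsurj t ht x
    obtain ⟨c, hc, hmc⟩ := hflow t ht ξ
    exact hmc ▸ mul_nonpos_of_nonneg_of_nonpos hc.le (h0 ξ)

/-- If the flow of characteristics of the transport equation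
`∂ₜm + u ∂ₓm + 2 ∂ₓu m = 0` is surjective at each time, then a sign of the initial
momentum is preserved: `m(0,·) ≥ 0` implies `m(t,·) ≥ 0` for all `t ∈ [0,T)`, and
likewise for `≤ 0`. -/
theorem sign_preservation_of_momentum (T : ℝ) (hT : 0 < T)
    (u m : ℝ → ℝ → ℝ)
    (hu : Continuous fun p : ℝ × ℝ => u p.1 p.2)
    (hux : Continuous fun p : ℝ × ℝ => deriv (u p.1) p.2)
    (hm : Differentiable ℝ fun p : ℝ × ℝ => m p.1 p.2)
    (heq : ∀ t ∈ Set.Ico (0 : ℝ) T, ∀ x : ℝ,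
      deriv (fun s => m s x) t + u t x * deriv (m t) x + 2 * deriv (u t) x * m t x = 0)
    (q : ℝ → ℝ → ℝ)
    (hq0 : ∀ ξ : ℝ, q 0 ξ = ξ)
    (hq : ∀ ξ : ℝ, ∀ t ∈ Set.Ico (0 : ℝ) T,
      HasDerivAt (fun s => q s ξ) (u t (q t ξ)) t)
    (hsurj : ∀ t ∈ Set.Ico (0 : ℝ) T, Function.Surjective (q t)) :
    ((∀ x : ℝ, 0 ≤ m 0 x) → ∀ t ∈ Set.Ico (0 : ℝ) T, ∀ x : ℝ, 0 ≤ m t x) ∧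
    ((∀ x : ℝ, m 0 x ≤ 0) → ∀ t ∈ Set.Ico (0 : ℝ) T, ∀ x : ℝ, m t x ≤ 0) :=
  sign_preservation_of_momentum_general T u m hux hm heq q hq0 hq hsurj
end

section
/- Let a > 0 and let m be a Schwartz function on ℝ. Then the Fourier transform of u = G_a * m satisfies 𝔉u(ξ) = (1 + 4π²ξ²)^(−a) · 𝔉m(ξ) for all ξ ∈ ℝ; equivalently, (1 + 4π²ξ²)^a · 𝔉u(ξ) = 𝔉m(ξ), so that u = G_a * m inverts the fractional inertia operator m = (1 − ∂ₓ²)^a u on the Fourier side. -/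
/-!
Writing `h_s(x) = (4πs)^(-1/2) e^(-x²/(4s))`, `G_a = Γ(a)⁻¹ ∫₀^∞ s^(a-1) e^(-s) h_s ds` is a
Gamma-weighted superposition of heat kernels, and `𝔉h_s(ξ) = e^(-4π²ξ²s)`. Each `h_s` has mass
one, so the integrand is integrable on `(0,∞) × ℝ` and Fubini moves `𝔉` inside the `s`-integral:
`𝔉G_a(ξ) = Γ(a)⁻¹ ∫₀^∞ s^(a-1) e^(-(1+4π²ξ²)s) ds = (1+4π²ξ²)^(-a)`.
The convolution theorem then gives `𝔉(G_a * m) = 𝔉G_a · 𝔉m`.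
-/

open MeasureTheory

open Real Set FourierTransform Convolution

namespace Real

variable {V E : Type*} [NormedAddCommGroup V] [InnerProductSpace ℝ V] [FiniteDimensional ℝ V]
  [MeasurableSpace V] [BorelSpace V] [NormedAddCommGroup E] [NormedSpace ℂ E]

theorem fourier_const_smul (c : ℂ) (f : V → E) (ξ : V) :
    𝓕 (fun x ↦ c • f x) ξ = c • 𝓕 f ξ :=
  congrFun (VectorFourier.fourierIntegral_const_smul _ _ _ f c) ξ

theorem fourier_integral_eq_integral_fourier {α : Type*} [MeasurableSpace α] {μ : Measure α}
    [SFinite μ] {F : α → V → E} (hF : Integrable (Function.uncurry F) (μ.prod volume))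
    (ξ : V) : 𝓕 (fun x ↦ ∫ s, F s x ∂μ) ξ = ∫ s, 𝓕 (F s) ξ ∂μ := by
  simp_rw [Real.fourier_eq, Circle.smul_def, ← integral_smul]
  refine (integral_integral_swap (hF.mono ?_ (ae_of_all _ fun ⟨s, x⟩ ↦ ?_))).symm
  · have : Continuous fun x : V ↦ ((𝐞 (-inner ℝ x ξ) : Circle) : ℂ) :=
      continuous_subtype_val.comp (continuous_fourierChar.comp (by fun_prop))
    exact (this.measurable.comp measurable_snd).aestronglyMeasurable.smul hF.aestronglyMeasurable
  · simp [norm_smul, Circle.norm_coe]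

end Real

noncomputable def heatKernel (s x : ℝ) : ℝ :=
  (4 * π * s) ^ (-(1 / 2) : ℝ) * exp (-x ^ 2 / (4 * s))

lemma heatKernel_eq_gaussian (s x : ℝ) :
    heatKernel s x = (4 * π * s) ^ (-(1 / 2) : ℝ) * exp (-(4 * s)⁻¹ * x ^ 2) := by
  rw [heatKernel]
  congr 2
  ring

section heatKernel

variable {s : ℝ}

lemma heatKernel_nonneg (hs : 0 ≤ s) (x : ℝ) : 0 ≤ heatKernel s x := by
  unfold heatKernel; positivity

lemma integrable_heatKernel (hs : 0 < s) : Integrable (heatKernel s) := by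
  rw [funext (heatKernel_eq_gaussian s)]
  exact (integrable_exp_neg_mul_sq (by positivity)).const_mul _

lemma integral_heatKernel (hs : 0 < s) : ∫ x, heatKernel s x = 1 := by
  simp only [funext (heatKernel_eq_gaussian s), integral_const_mul, integral_gaussian,
    div_inv_eq_mul, sqrt_eq_rpow]
  rw [show π * (4 * s) = 4 * π * s by ring, ← rpow_add (by positivity)]
  norm_num

lemma fourier_heatKernel (hs : 0 < s) (ξ : ℝ) :
    𝓕 (fun x ↦ (heatKernel s x : ℂ)) ξ = Complex.exp (-(4 * π ^ 2 * ξ ^ 2 * s)) := by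
  have hπs : 0 < 4 * π * s := by positivity
  set b : ℂ := (((4 * π * s)⁻¹ : ℝ) : ℂ)
  have hb : 0 < b.re := by simpa [b] using inv_pos.2 hπs
  have hsqrt : b ^ (1 / 2 : ℂ) = ((4 * π * s) ^ (-(1 / 2) : ℝ) : ℝ) := by
    rw [rpow_neg hπs.le, ← inv_rpow hπs.le, Complex.ofReal_cpow (inv_nonneg.2 hπs.le)]
    norm_num [b]
  have hgauss : (fun x ↦ (heatKernel s x : ℂ)) =
      fun x : ℝ ↦ (((4 * π * s) ^ (-(1 / 2) : ℝ) : ℝ) : ℂ) • Complex.exp (-π * b * x ^ 2) := by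
    ext x
    simp only [heatKernel, b, smul_eq_mul]
    push_cast
    congr 2
    field_simp
  rw [hgauss, Real.fourier_const_smul, fourier_gaussian_pi hb, hsqrt, smul_eq_mul, ← mul_assoc,
    mul_one_div_cancel (by exact_mod_cast (rpow_pos_of_pos hπs _).ne'), one_mul]
  congr 1
  simp only [b]
  push_cast
  field_simp

end heatKernel

lemma Gkernel_eq_integral_heatKernel (a x : ℝ) :
    Gkernel a x = (Gamma a)⁻¹ * ∫ s in Ioi 0, s ^ (a - 1) * exp (-s) * heatKernel s x := by
  simp only [Gkernel, heatKernel, one_div, mul_assoc]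

section Gkernel

variable {a : ℝ}

lemma integrable_rpow_mul_exp_neg_mul_heatKernel (ha : 0 < a) :
    Integrable (fun p : ℝ × ℝ ↦ p.1 ^ (a - 1) * exp (-p.1) * heatKernel p.1 p.2)
      ((volume.restrict (Ioi 0)).prod volume) := by
  have hmeas : Measurable fun p : ℝ × ℝ ↦ p.1 ^ (a - 1) * exp (-p.1) * heatKernel p.1 p.2 := by
    unfold heatKernel; fun_prop
  rw [integrable_prod_iff hmeas.aestronglyMeasurable]
  constructor
  · filter_upwards [ae_restrict_mem measurableSet_Ioi] with s hs
    exact (integrable_heatKernel hs).const_mul _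
  · refine (GammaIntegral_convergent ha).congr ?_
    filter_upwards [ae_restrict_mem measurableSet_Ioi] with s (hs : 0 < s)
    simp only [norm_mul, norm_of_nonneg (rpow_nonneg hs.le _), norm_of_nonneg (exp_pos _).le,
      norm_of_nonneg (heatKernel_nonneg hs.le _), integral_const_mul, integral_heatKernel hs,
      mul_one]
    exact mul_comm _ _

lemma integrable_Gkernel (ha : 0 < a) : Integrable (Gkernel a) := by
  rw [funext (Gkernel_eq_integral_heatKernel a)]
  exact (integrable_rpow_mul_exp_neg_mul_heatKernel ha).integral_prod_right.const_mul _

lemma fourier_Gkernel (ha : 0 < a) (ξ : ℝ) :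
    𝓕 (fun x ↦ (Gkernel a x : ℂ)) ξ = ((1 + 4 * π ^ 2 * ξ ^ 2) ^ (-a) : ℝ) := by
  set c := 1 + 4 * π ^ 2 * ξ ^ 2
  have hc : 0 < c := by positivity
  have hG : (fun x ↦ (Gkernel a x : ℂ)) = fun x ↦ ((Gamma a)⁻¹ : ℂ) •
      ∫ s in Ioi 0, ((s ^ (a - 1) * exp (-s) : ℝ) : ℂ) • (heatKernel s x : ℂ) := by
    ext x
    rw [Gkernel_eq_integral_heatKernel, Complex.ofReal_mul, ← integral_complex_ofReal]
    push_cast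
    simp only [smul_eq_mul]
  calc 𝓕 (fun x ↦ (Gkernel a x : ℂ)) ξ
      = ((Gamma a)⁻¹ : ℂ) • 𝓕 (fun x ↦ ∫ s in Ioi 0,
          ((s ^ (a - 1) * exp (-s) : ℝ) : ℂ) • (heatKernel s x : ℂ)) ξ := by
        rw [hG, Real.fourier_const_smul]
    _ = ((Gamma a)⁻¹ : ℂ) • ∫ s in Ioi 0,
          ((s ^ (a - 1) * exp (-s) : ℝ) : ℂ) • 𝓕 (fun x ↦ (heatKernel s x : ℂ)) ξ := by
        rw [Real.fourier_integral_eq_integral_fourier]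
        · simp_rw [Real.fourier_const_smul]
        · simpa [Function.uncurry_def] using
            (integrable_rpow_mul_exp_neg_mul_heatKernel ha).ofReal (𝕜 := ℂ)
    _ = ((Gamma a)⁻¹ : ℂ) • ∫ s in Ioi 0, ((s ^ (a - 1) * exp (-(c * s)) : ℝ) : ℂ) := by
        congr 1
        refine setIntegral_congr_fun measurableSet_Ioi fun s (hs : 0 < s) ↦ ?_
        rw [fourier_heatKernel hs, smul_eq_mul]
        push_cast
        rw [mul_assoc, ← Complex.exp_add]
        congr 2
        push_cast [c]
        ring
    _ = ((c ^ (-a) : ℝ) : ℂ) := by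
        rw [integral_complex_ofReal, integral_rpow_mul_exp_neg_mul_Ioi ha hc, smul_eq_mul,
          ← Complex.ofReal_inv, ← Complex.ofReal_mul, one_div, inv_rpow hc.le, ← rpow_neg hc.le,
          mul_comm (c ^ (-a)), inv_mul_cancel_left₀ (Gamma_pos_of_pos ha).ne']

end Gkernel

/-- For `a > 0` and Schwartz `m`, the Fourier transform of `u = G_a * m` satisfies
`𝔉u(ξ) = (1 + 4π²ξ²)^(-a) 𝔉m(ξ)`; equivalently `(1 + 4π²ξ²)^a 𝔉u(ξ) = 𝔉m(ξ)`,
so convolution with `G_a` inverts the fractional inertia operator on the Fourier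
side. -/
theorem fourier_convolution_Gkernel (a : ℝ) (ha : 0 < a)
    (m : SchwartzMap ℝ ℝ) (ξ : ℝ) :
    FourierTransform.fourier (fun x => ((∫ y : ℝ, Gkernel a (x - y) * m y : ℝ) : ℂ)) ξ
        = (((1 + 4 * Real.pi ^ 2 * ξ ^ 2) ^ (-a) : ℝ) : ℂ) *
          FourierTransform.fourier (fun x => ((m x : ℝ) : ℂ)) ξ ∧
    (((1 + 4 * Real.pi ^ 2 * ξ ^ 2) ^ a : ℝ) : ℂ) *
        FourierTransform.fourier (fun x => ((∫ y : ℝ, Gkernel a (x - y) * m y : ℝ) : ℂ)) ξ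
      = FourierTransform.fourier (fun x => ((m x : ℝ) : ℂ)) ξ := by
  have hconv : (fun x ↦ ((∫ y, Gkernel a (x - y) * m y : ℝ) : ℂ)) =
      (fun x ↦ (m x : ℂ)) ⋆[ContinuousLinearMap.mul ℂ ℂ] fun x ↦ (Gkernel a x : ℂ) := by
    ext x
    simp [convolution_def, ← integral_complex_ofReal, mul_comm]
  have hfourier : 𝓕 (fun x ↦ ((∫ y, Gkernel a (x - y) * m y : ℝ) : ℂ)) ξ =
      (((1 + 4 * π ^ 2 * ξ ^ 2) ^ (-a) : ℝ) : ℂ) * 𝓕 (fun x ↦ (m x : ℂ)) ξ := by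
    rw [hconv, ← fourier_Gkernel ha ξ, mul_comm]
    -- `exact` rather than `rw`: the library lemma's `𝓕` reaches the normed group on `ℂ`
    -- through a different (defeq) instance path.
    exact Real.fourier_mul_convolution_eq m.integrable.ofReal (integrable_Gkernel ha).ofReal ξ
  refine ⟨hfourier, ?_⟩
  rw [hfourier, ← mul_assoc, ← Complex.ofReal_mul, ← rpow_add (by positivity), add_neg_cancel,
    rpow_zero, Complex.ofReal_one, one_mul]
end
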